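/- Let D be the dihedral group of order 2q with q odd, G its cyclic subgroup of order q, Σ, Σ' two distinct subgroups of order 2, and B a uniquely 2-divisible D-module. Then there are isomorphisms of abelian groups: (B[N_G] ∩ (B^Σ + B^Σ'))/I_G·B ≅ Ĥ^{-1}(D, B), and B[N_G]/((B^Σ + B^Σ') ∩ B[N_G]) ≅ H¹(D, B). -/

import Mathlib

open DihedralGroup

section Prelude

variable (q : ℕ) [NeZero q] (B : Type*) [AddCommGroup B]
  [DistribMulAction (DihedralGroup q) B]

/-- The subgroup of points fixed by a subgroup `H` of the dihedral group. -/
def fixedBy (H : Subgroup (DihedralGroup q)) : AddSubgroup B where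
  carrier := {b | ∀ h ∈ H, h • b = b}
  zero_mem' := fun h _ => smul_zero h
  add_mem' := by intro a b ha hb h hh; rw [smul_add, ha h hh, hb h hh]
  neg_mem' := by intro a ha h hh; rw [smul_neg, ha h hh]

/-- The norm map of the full dihedral group. -/
def normD : B →+ B where
  toFun b := ∑ g : DihedralGroup q, g • b
  map_zero' := by simp
  map_add' x y := by simp [smul_add, Finset.sum_add_distrib]

/-- The norm map of the rotation subgroup `G = ⟨ρ⟩`. -/
def normG : B →+ B where
  toFun b := ∑ i : ZMod q, (r i : DihedralGroup q) • b
  map_zero' := by simp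
  map_add' x y := by simp [smul_add, Finset.sum_add_distrib]

/-- `I_G·B = (1-ρ)B`. -/
def augG : AddSubgroup B :=
  AddMonoidHom.range
    { toFun := fun b => b - (r 1 : DihedralGroup q) • b
      map_zero' := by simp
      map_add' := by intro x y; simp only [smul_add]; abel }

/-- `I_D·B`. -/
def augD : AddSubgroup B :=
  AddSubgroup.closure {x | ∃ (g : DihedralGroup q) (b : B), x = b - g • b}

/-- Tate cohomology `Ĥ⁻¹(D, B)`. -/
abbrev Hneg1D : Type _ :=
  (normD q B).ker ⧸ ((augD q B).addSubgroupOf (normD q B).ker)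

/-- Inhomogeneous 1-cocycles of the dihedral group with values in `B`. -/
def Z1D : AddSubgroup (DihedralGroup q → B) where
  carrier := {f | ∀ g h : DihedralGroup q, f (g * h) = f g + g • f h}
  zero_mem' := by intro g h; simp
  add_mem' := by
    intro a b ha hb g h
    simp only [Pi.add_apply, ha g h, hb g h, smul_add]; abel
  neg_mem' := by
    intro a ha g h
    simp only [Pi.neg_apply, ha g h, smul_neg]; abel

/-- 1-coboundaries of the dihedral group with values in `B`. -/
def B1D : AddSubgroup (DihedralGroup q → B) :=
  AddMonoidHom.range
    { toFun := fun b => fun g : DihedralGroup q => g • b - b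
      map_zero' := by funext g; simp
      map_add' := by intro x y; funext g; simp only [smul_add, Pi.add_apply]; abel }

/-- Group cohomology `H¹(D, B)` via inhomogeneous cocycles. -/
abbrev H1D : Type _ := Z1D q B ⧸ ((B1D q B).addSubgroupOf (Z1D q B))

/-- `B[N_G] ∩ (B^Σ + B^Σ')`. -/
def kerNormCapFix : AddSubgroup B :=
  (normG q B).ker ⊓ (fixedBy q B (Subgroup.closure {(sr 0 : DihedralGroup q)}) ⊔
    fixedBy q B (Subgroup.closure {(sr 0 * r 1 : DihedralGroup q)}))

/-- `(B^Σ + B^Σ') ∩ B[N_G]`. -/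
def fixCapKerNorm : AddSubgroup B :=
  (fixedBy q B (Subgroup.closure {(sr 0 : DihedralGroup q)}) ⊔
    fixedBy q B (Subgroup.closure {(sr 0 * r 1 : DihedralGroup q)})) ⊓ (normG q B).ker

end Prelude

set_option linter.unusedSectionVars false

section Aux
open Finset

variable (q : ℕ) [NeZero q] {B : Type*} [AddCommGroup B]
  [DistribMulAction (DihedralGroup q) B]

lemma g_zsmul (g : DihedralGroup q) (n : ℤ) (b : B) : g • (n • b) = n • (g • b) :=
  (DistribMulAction.toAddMonoidHom B g).map_zsmul n b

lemma r_zero_smul (b : B) : (r 0 : DihedralGroup q) • b = b := by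
  rw [← one_def, one_smul]

lemma r_r_smul (i j : ZMod q) (b : B) :
    (r i : DihedralGroup q) • (r j : DihedralGroup q) • b = (r (i + j) : DihedralGroup q) • b := by
  rw [← mul_smul, r_mul_r]

lemma r_sr_smul (i j : ZMod q) (b : B) :
    (r i : DihedralGroup q) • (sr j : DihedralGroup q) • b = (sr (j - i) : DihedralGroup q) • b := by
  rw [← mul_smul, r_mul_sr]

lemma sr_r_smul (i j : ZMod q) (b : B) :
    (sr i : DihedralGroup q) • (r j : DihedralGroup q) • b = (sr (i + j) : DihedralGroup q) • b := by
  rw [← mul_smul, sr_mul_r]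

lemma sr_sr_smul (i j : ZMod q) (b : B) :
    (sr i : DihedralGroup q) • (sr j : DihedralGroup q) • b = (r (j - i) : DihedralGroup q) • b := by
  rw [← mul_smul, sr_mul_sr]

lemma sr0_sr0_smul (b : B) : (sr 0 : DihedralGroup q) • (sr 0 : DihedralGroup q) • b = b := by
  rw [sr_sr_smul, sub_zero, r_zero_smul]

section Half
variable (h2 : Function.Bijective (fun b : B => (2 : ℤ) • b))

noncomputable def halfB : B → B := Function.surjInv h2.2

lemma two_smul_halfB (y : B) : (2 : ℤ) • halfB h2 y = y := Function.surjInv_eq h2.2 y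

lemma halfB_eq_of {y z : B} (h : (2 : ℤ) • z = y) : halfB h2 y = z := by
  apply h2.1
  show (2 : ℤ) • halfB h2 y = (2 : ℤ) • z
  rw [two_smul_halfB, h]

lemma halfB_two_smul (y : B) : halfB h2 ((2 : ℤ) • y) = y := halfB_eq_of h2 rfl

lemma halfB_add (y z : B) : halfB h2 (y + z) = halfB h2 y + halfB h2 z := by
  apply halfB_eq_of h2
  rw [smul_add, two_smul_halfB, two_smul_halfB]

lemma halfB_neg (y : B) : halfB h2 (-y) = - halfB h2 y := by
  apply halfB_eq_of h2
  rw [smul_neg, two_smul_halfB]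

lemma halfB_sub (y z : B) : halfB h2 (y - z) = halfB h2 y - halfB h2 z := by
  apply halfB_eq_of h2
  rw [smul_sub, two_smul_halfB, two_smul_halfB]

lemma halfB_zero : halfB h2 (0 : B) = 0 := by
  apply halfB_eq_of h2; rw [smul_zero]

lemma halfB_gsmul (g : DihedralGroup q) (y : B) : halfB h2 (g • y) = g • halfB h2 y := by
  apply halfB_eq_of h2
  rw [← g_zsmul, two_smul_halfB]

lemma halfB_normG (y : B) : halfB h2 (normG q B y) = normG q B (halfB h2 y) := by
  apply halfB_eq_of h2
  rw [← AddMonoidHom.map_zsmul, two_smul_halfB]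

end Half

lemma normG_apply (b : B) : normG q B b = ∑ i : ZMod q, (r i : DihedralGroup q) • b := rfl

lemma normG_sr0 (b : B) :
    normG q B ((sr 0 : DihedralGroup q) • b) = (sr 0 : DihedralGroup q) • normG q B b := by
  show ∑ i : ZMod q, (r i : DihedralGroup q) • (sr 0 : DihedralGroup q) • b
      = (sr 0 : DihedralGroup q) • ∑ i : ZMod q, (r i : DihedralGroup q) • b
  rw [Finset.smul_sum]
  refine Fintype.sum_equiv (Equiv.neg (ZMod q)) _ _ (fun i => ?_)
  rw [r_sr_smul, sr_r_smul]
  simp only [Equiv.neg_apply, zero_sub, zero_add]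

def dihedralSum : (ZMod q) ⊕ (ZMod q) ≃ DihedralGroup q where
  toFun := fun i => match i with | Sum.inl j => r j | Sum.inr j => sr j
  invFun := fun i => match i with | r j => Sum.inl j | sr j => Sum.inr j
  left_inv := by rintro (x | x) <;> rfl
  right_inv := by rintro (x | x) <;> rfl

lemma normD_eq (b : B) :
    normD q B b = normG q B b + (sr 0 : DihedralGroup q) • normG q B b := by
  show ∑ g : DihedralGroup q, g • b = _
  rw [← (dihedralSum q).sum_comp (fun g : DihedralGroup q => g • b), Fintype.sum_sum_type]
  congr 1
  show ∑ i : ZMod q, (sr i : DihedralGroup q) • b = (sr 0 : DihedralGroup q) • normG q B b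
  rw [normG_apply, Finset.smul_sum]
  refine Finset.sum_congr rfl (fun i _ => ?_)
  rw [sr_r_smul, zero_add]

end Aux

section Aux2
open Finset DihedralGroup

set_option linter.unusedSectionVars false

variable (q : ℕ) [NeZero q] {B : Type*} [AddCommGroup B]
  [DistribMulAction (DihedralGroup q) B]

lemma sum_range_q (f : ZMod q → B) :
    ∑ k ∈ Finset.range q, f (k : ZMod q) = ∑ i : ZMod q, f i := by
  refine Finset.sum_bij' (fun k _ => ((k : ZMod q))) (fun i _ => i.val)
    (fun a ha => Finset.mem_univ _) (fun i _ => Finset.mem_range.2 (ZMod.val_lt i))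
    (fun a ha => ZMod.val_cast_of_lt (Finset.mem_range.1 ha))
    (fun i _ => ZMod.natCast_rightInverse i) (fun a ha => rfl)

/-- Partial norm sums. -/
def dNF (x : B) (n : ℕ) : B := ∑ k ∈ Finset.range n, (r (k : ZMod q) : DihedralGroup q) • x

lemma dNF_zero (x : B) : dNF q x 0 = 0 := by simp [dNF]

lemma dNF_succ (x : B) (n : ℕ) :
    dNF q x (n + 1) = dNF q x n + (r (n : ZMod q) : DihedralGroup q) • x :=
  Finset.sum_range_succ _ n

lemma dNF_add_x (x y : B) (n : ℕ) : dNF q (x + y) n = dNF q x n + dNF q y n := by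
  simp [dNF, smul_add, Finset.sum_add_distrib]

lemma dNF_add (x : B) (m n : ℕ) :
    dNF q x (m + n) = dNF q x m + (r (m : ZMod q) : DihedralGroup q) • dNF q x n := by
  induction n with
  | zero => rw [Nat.add_zero, dNF_zero, smul_zero, add_zero]
  | succ n ih =>
      rw [← Nat.add_assoc, dNF_succ, ih, dNF_succ, smul_add, r_r_smul]
      push_cast
      abel

lemma dNF_q (x : B) : dNF q x q = normG q B x := by
  rw [dNF, sum_range_q q (fun i => (r i : DihedralGroup q) • x), normG_apply]

lemma dNF_qmul (x : B) (hx : normG q B x = 0) (t : ℕ) : dNF q x (q * t) = 0 := by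
  induction t with
  | zero => rw [Nat.mul_zero, dNF_zero]
  | succ t ih =>
      rw [Nat.mul_succ, dNF_add, ih, zero_add, dNF_q, hx, smul_zero]

lemma dNF_mod (x : B) (hx : normG q B x = 0) (n : ℕ) : dNF q x n = dNF q x (n % q) := by
  conv_lhs => rw [← Nat.div_add_mod n q]
  rw [dNF_add, dNF_qmul q x hx, zero_add]
  rw [Nat.cast_mul, ZMod.natCast_self, zero_mul, r_zero_smul]

lemma dNF_congr (x : B) (hx : normG q B x = 0) {m n : ℕ}
    (h : (m : ZMod q) = (n : ZMod q)) : dNF q x m = dNF q x n := by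
  rw [dNF_mod q x hx m, dNF_mod q x hx n, (ZMod.natCast_eq_natCast_iff' m n q).1 h]

lemma r_one_dNF (x : B) (n : ℕ) :
    (r 1 : DihedralGroup q) • dNF q x n = dNF q x n + (r (n : ZMod q) : DihedralGroup q) • x - x := by
  have h1 : (r 1 : DihedralGroup q) • dNF q x n
      = ∑ k ∈ Finset.range n, (r ((k + 1 : ℕ) : ZMod q) : DihedralGroup q) • x := by
    rw [dNF, Finset.smul_sum]
    refine Finset.sum_congr rfl (fun k _ => ?_)
    rw [r_r_smul, Nat.cast_add, Nat.cast_one, add_comm]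
  rw [h1]
  have h2 := Finset.sum_range_succ' (fun k => (r (k : ZMod q) : DihedralGroup q) • x) n
  rw [show (∑ i ∈ Finset.range (n+1), (r (i : ZMod q) : DihedralGroup q) • x) = dNF q x (n+1) from rfl] at h2
  rw [dNF_succ] at h2
  have : (∑ i ∈ Finset.range n, (r ((i + 1 : ℕ) : ZMod q) : DihedralGroup q) • x)
      = dNF q x n + (r (n : ZMod q) : DihedralGroup q) • x - ((r ((0:ℕ) : ZMod q) : DihedralGroup q) • x) := by
    exact eq_sub_iff_add_eq.2 h2.symm
  rw [this, Nat.cast_zero, r_zero_smul]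

lemma dNF_sub_r_one (x : B) (n : ℕ) :
    dNF q x n - (r 1 : DihedralGroup q) • dNF q x n = x - (r (n : ZMod q) : DihedralGroup q) • x := by
  rw [r_one_dNF]; abel

lemma sr0_dNF (x : B) (hσ : (sr 0 : DihedralGroup q) • x = -x) (n : ℕ) :
    (sr 0 : DihedralGroup q) • dNF q x n
      = -((r (1 - (n : ZMod q)) : DihedralGroup q) • dNF q x n) := by
  rcases n with _ | m
  · rw [dNF_zero, smul_zero, smul_zero, neg_zero]
  · have lhs : (sr 0 : DihedralGroup q) • dNF q x (m+1)
        = ∑ k ∈ Finset.range (m+1), -((r (-(k:ℕ) : ZMod q) : DihedralGroup q) • x) := by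
      rw [dNF, Finset.smul_sum]
      refine Finset.sum_congr rfl (fun k _ => ?_)
      rw [sr_r_smul, show ((sr (0 + (k:ℕ)) : DihedralGroup q)) = sr (k : ℕ) by rw [zero_add],
        show ((sr ((k:ℕ)) : DihedralGroup q)) • x = (r (-(k:ℕ)) : DihedralGroup q) • (sr 0 : DihedralGroup q) • x by
          rw [r_sr_smul, zero_sub, neg_neg],
        hσ, smul_neg]
    have rhs : (r (1 - ((m+1 : ℕ) : ZMod q)) : DihedralGroup q) • dNF q x (m+1)
        = ∑ k ∈ Finset.range (m+1), (r (1 - ((m+1:ℕ) : ZMod q) + (k:ℕ)) : DihedralGroup q) • x := by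
      rw [dNF, Finset.smul_sum]
      exact Finset.sum_congr rfl (fun k _ => by rw [r_r_smul])
    rw [lhs, rhs]
    have key : ∑ k ∈ Finset.range (m+1), (r (1 - ((m+1:ℕ) : ZMod q) + (k:ℕ)) : DihedralGroup q) • x
        = ∑ k ∈ Finset.range (m+1), (r (-(k:ℕ) : ZMod q) : DihedralGroup q) • x := by
      rw [← Finset.sum_range_reflect (fun k => (r (1 - ((m+1:ℕ) : ZMod q) + (k:ℕ)) : DihedralGroup q) • x) (m+1)]
      refine Finset.sum_congr rfl (fun k hk => ?_)
      have hk' : k ≤ m := Nat.lt_succ_iff.1 (Finset.mem_range.1 hk)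
      have e1 : ((m + 1 - 1 - k : ℕ) : ZMod q) = (m : ZMod q) - (k : ℕ) := by
        simp only [Nat.add_sub_cancel]
        rw [Nat.cast_sub hk']
      rw [e1]
      congr 1
      congr 1
      push_cast
      ring
    rw [key, Finset.sum_neg_distrib]

/-- `d x i` for `i : ZMod q`. -/
def dz (x : B) (i : ZMod q) : B := dNF q x i.val

lemma dz_natCast (x : B) (hx : normG q B x = 0) (n : ℕ) :
    dz q x ((n : ZMod q)) = dNF q x n :=
  dNF_congr q x hx (by rw [ZMod.natCast_rightInverse ((n : ZMod q))])

lemma dz_zero (x : B) : dz q x 0 = 0 := by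
  rw [dz, ZMod.val_zero, dNF_zero]

lemma dz_add_x (x y : B) (i : ZMod q) : dz q (x + y) i = dz q x i + dz q y i :=
  dNF_add_x q x y i.val

lemma r_val (i : ZMod q) : (r ((i.val : ℕ) : ZMod q) : DihedralGroup q) = r i := by
  rw [ZMod.natCast_rightInverse i]

lemma dz_add (x : B) (hx : normG q B x = 0) (i j : ZMod q) :
    dz q x (i + j) = dz q x i + (r i : DihedralGroup q) • dz q x j := by
  have : dz q x (i + j) = dNF q x (i.val + j.val) := by
    rw [← dz_natCast q x hx]
    congr 1
    push_cast
    rw [ZMod.natCast_rightInverse i, ZMod.natCast_rightInverse j]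
  rw [this, dNF_add, r_val]
  rfl

lemma dz_sub_r_one (x : B) (i : ZMod q) :
    dz q x i - (r 1 : DihedralGroup q) • dz q x i = x - (r i : DihedralGroup q) • x := by
  have := dNF_sub_r_one q x i.val
  rw [r_val] at this
  exact this

lemma sr0_dz (x : B) (hσ : (sr 0 : DihedralGroup q) • x = -x) (i : ZMod q) :
    (sr 0 : DihedralGroup q) • dz q x i = -((r (1 - i) : DihedralGroup q) • dz q x i) := by
  have := sr0_dNF q x hσ i.val
  rw [show ((i.val : ℕ) : ZMod q) = i from ZMod.natCast_rightInverse i] at this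
  exact this

end Aux2

section Aux3
open Finset DihedralGroup

set_option linter.unusedSectionVars false

variable (q : ℕ) [NeZero q] {B : Type*} [AddCommGroup B]
  [DistribMulAction (DihedralGroup q) B]

lemma mem_Z1D {f : DihedralGroup q → B} :
    f ∈ Z1D q B ↔ ∀ g h : DihedralGroup q, f (g * h) = f g + g • f h := Iff.rfl

lemma mem_B1D {f : DihedralGroup q → B} :
    f ∈ B1D q B ↔ ∃ b : B, (fun g : DihedralGroup q => g • b - b) = f := by
  constructor
  · rintro ⟨b, hb⟩; exact ⟨b, hb⟩
  · rintro ⟨b, hb⟩; exact ⟨b, hb⟩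

/-- The standard cocycle attached to `x` with `N_G x = 0`, `σ x = -x`. -/
def Fc (x : B) : DihedralGroup q → B
  | DihedralGroup.r i => dz q x i
  | DihedralGroup.sr i => x + (sr 0 : DihedralGroup q) • dz q x i

@[simp] lemma Fc_r (x : B) (i : ZMod q) : Fc q x (r i) = dz q x i := rfl

@[simp] lemma Fc_sr (x : B) (i : ZMod q) :
    Fc q x (sr i) = x + (sr 0 : DihedralGroup q) • dz q x i := rfl

lemma dz_zero_x (i : ZMod q) : dz q (0 : B) i = 0 := by simp [dz, dNF]

lemma Fc_zero : Fc q (0 : B) = 0 := by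
  funext g; rcases g with i | i <;> simp [Fc, dz_zero_x]

lemma Fc_add (x y : B) : Fc q (x + y) = Fc q x + Fc q y := by
  funext g; rcases g with i | i <;>
    simp only [Fc, dz_add_x, smul_add, Pi.add_apply] <;> abel

lemma Fc_mem (x : B) (hx : normG q B x = 0) (hσ : (sr 0 : DihedralGroup q) • x = -x) :
    Fc q x ∈ Z1D q B := by
  rw [mem_Z1D]
  intro g h
  have sub_cancel : ∀ a b c d : B, a - b = c - d → b + c = d + a := by
    intro a b c d hh
    apply eq_of_sub_eq_zero
    have e : b + c - (d + a) = (c - d) - (a - b) := by abel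
    rw [e, ← hh, sub_self]
  rcases g with i | i <;> rcases h with j | j
  · -- r i * r j
    show Fc q x (r (i + j)) = _
    simp only [Fc_r]
    exact dz_add q x hx i j
  · -- r i * sr j = sr (j - i)
    show Fc q x (sr (j - i)) = _
    simp only [Fc_r, Fc_sr]
    have h2 : dz q x (j - i) = dz q x j - (r (j - i) : DihedralGroup q) • dz q x i := by
      have h0 := dz_add q x hx (j - i) i
      rw [sub_add_cancel] at h0
      rw [h0]; abel
    have h1 : (sr 0 : DihedralGroup q) • dz q x (j - i)
        = -((r (1 - (j - i)) : DihedralGroup q) • dz q x (j - i)) := sr0_dz q x hσ _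
    have h3 : (r (1 - (j - i)) : DihedralGroup q) • (r (j - i) : DihedralGroup q) • dz q x i
        = (r 1 : DihedralGroup q) • dz q x i := by
      rw [r_r_smul]; congr 2; ring
    have h4 : (r i : DihedralGroup q) • ((sr 0 : DihedralGroup q) • dz q x j)
        = -((r (1 - (j - i)) : DihedralGroup q) • dz q x j) := by
      rw [sr0_dz q x hσ j, smul_neg, r_r_smul]
      congr 3; ring
    rw [h1, h2, smul_sub, h3, smul_add, h4]
    have h5 := dz_sub_r_one q x i
    have h6 : x + (r 1 : DihedralGroup q) • dz q x i
        = dz q x i + (r i : DihedralGroup q) • x := by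
      have := sub_cancel _ _ _ _ h5
      -- (r 1 • dz i) + x = (r i • x) + dz i
      rw [add_comm ((r 1 : DihedralGroup q) • dz q x i) x] at this
      rw [this]; abel
    calc x + -((r (1 - (j - i)) : DihedralGroup q) • dz q x j - (r 1 : DihedralGroup q) • dz q x i)
        = (x + (r 1 : DihedralGroup q) • dz q x i)
            + -((r (1 - (j - i)) : DihedralGroup q) • dz q x j) := by abel
      _ = (dz q x i + (r i : DihedralGroup q) • x)
            + -((r (1 - (j - i)) : DihedralGroup q) • dz q x j) := by rw [h6]
      _ = dz q x i + ((r i : DihedralGroup q) • x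
            + -((r (1 - (j - i)) : DihedralGroup q) • dz q x j)) := by abel
  · -- sr i * r j = sr (i + j)
    show Fc q x (sr (i + j)) = _
    simp only [Fc_r, Fc_sr]
    have e : (sr i : DihedralGroup q) • dz q x j
        = (sr 0 : DihedralGroup q) • (r i : DihedralGroup q) • dz q x j := by
      rw [← mul_smul, sr_mul_r, zero_add]
    rw [dz_add q x hx i j, smul_add, e]
    abel
  · -- sr i * sr j = r (j - i)
    show Fc q x (r (j - i)) = _
    simp only [Fc_r, Fc_sr]
    have hL : dz q x (j - i) = (r (-i) : DihedralGroup q) • dz q x j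
        - (r (-i) : DihedralGroup q) • dz q x i := by
      have h0 := dz_add q x hx i (j - i)
      rw [add_sub_cancel] at h0
      have := congrArg (fun y => (r (-i) : DihedralGroup q) • y) h0
      simp only [smul_add, r_r_smul] at this
      rw [show (-i + i : ZMod q) = 0 by ring, r_zero_smul] at this
      rw [this]; abel
    have hsx : (sr i : DihedralGroup q) • x = -((r (-i) : DihedralGroup q) • x) := by
      rw [show (sr i : DihedralGroup q) = r (-i) * sr 0 by rw [r_mul_sr, zero_sub, neg_neg],
        mul_smul, hσ, smul_neg]
    have hsd : (sr i : DihedralGroup q) • ((sr 0 : DihedralGroup q) • dz q x j)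
        = (r (-i) : DihedralGroup q) • dz q x j := by
      rw [← mul_smul, sr_mul_sr, zero_sub]
    have hσi : (sr 0 : DihedralGroup q) • dz q x i
        = -((r (1 - i) : DihedralGroup q) • dz q x i) := sr0_dz q x hσ i
    have h6 : (r (-i) : DihedralGroup q) • dz q x i - (r (1 - i) : DihedralGroup q) • dz q x i
        = (r (-i) : DihedralGroup q) • x - x := by
      have h5 := dz_sub_r_one q x i
      have := congrArg (fun y => (r (-i) : DihedralGroup q) • y) h5
      simp only [smul_sub, r_r_smul] at this
      rw [show (-i + 1 : ZMod q) = 1 - i by ring, show (-i + i : ZMod q) = 0 by ring,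
        r_zero_smul] at this
      exact this
    rw [hL, smul_add, hsx, hsd, hσi]
    have := sub_cancel _ _ _ _ h6
    -- (r (1-i) • dz i) + (r (-i) • x) = x + (r (-i) • dz i)
    calc (r (-i) : DihedralGroup q) • dz q x j - (r (-i) : DihedralGroup q) • dz q x i
        = ((r (1 - i) : DihedralGroup q) • dz q x i + (r (-i) : DihedralGroup q) • x)
            - (r (1 - i) : DihedralGroup q) • dz q x i - (r (-i) : DihedralGroup q) • x
            + (r (-i) : DihedralGroup q) • dz q x j
            - (r (-i) : DihedralGroup q) • dz q x i := by abel
      _ = (x + (r (-i) : DihedralGroup q) • dz q x i)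
            - (r (1 - i) : DihedralGroup q) • dz q x i - (r (-i) : DihedralGroup q) • x
            + (r (-i) : DihedralGroup q) • dz q x j
            - (r (-i) : DihedralGroup q) • dz q x i := by rw [this]
      _ = x + -((r (1 - i) : DihedralGroup q) • dz q x i)
            + (-((r (-i) : DihedralGroup q) • x) + (r (-i) : DihedralGroup q) • dz q x j) := by
            abel

end Aux3

section Aux4
open Finset DihedralGroup

set_option linter.unusedSectionVars false

variable (q : ℕ) [NeZero q] {B : Type*} [AddCommGroup B]
  [DistribMulAction (DihedralGroup q) B]

lemma mem_augG_iff {y : B} : y ∈ augG q B ↔ ∃ c : B, c - (r 1 : DihedralGroup q) • c = y :=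
  Iff.rfl

lemma augG_r_sub (j : ZMod q) (b : B) : b - (r j : DihedralGroup q) • b ∈ augG q B :=
  ⟨dz q b j, dz_sub_r_one q b j⟩

lemma normG_r (j : ZMod q) (b : B) : normG q B ((r j : DihedralGroup q) • b) = normG q B b := by
  rw [normG_apply, normG_apply]
  refine Fintype.sum_equiv (Equiv.addRight j) _ _ (fun i => ?_)
  rw [r_r_smul, Equiv.coe_addRight]

lemma augG_le_kerG : augG q B ≤ (normG q B).ker := by
  rintro y ⟨c, rfl⟩
  simp only [AddMonoidHom.coe_mk, ZeroHom.coe_mk]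
  rw [AddMonoidHom.mem_ker, map_sub, normG_r, sub_self]

lemma augG_sr0 {y : B} (hy : y ∈ augG q B) : (sr 0 : DihedralGroup q) • y ∈ augG q B := by
  obtain ⟨c, rfl⟩ := hy
  simp only [AddMonoidHom.coe_mk, ZeroHom.coe_mk]
  have : (sr 0 : DihedralGroup q) • (c - (r 1 : DihedralGroup q) • c)
      = (sr 0 : DihedralGroup q) • c - (r (-1) : DihedralGroup q) • ((sr 0 : DihedralGroup q) • c) := by
    rw [smul_sub, ← mul_smul, ← mul_smul, sr_mul_r, zero_add,
      r_mul_sr, zero_sub, neg_neg]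
  rw [this]
  exact augG_r_sub q (-1) _

lemma augG_halfB (h2 : Function.Bijective (fun b : B => (2 : ℤ) • b))
    {y : B} (hy : y ∈ augG q B) : halfB h2 y ∈ augG q B := by
  obtain ⟨c, rfl⟩ := hy
  simp only [AddMonoidHom.coe_mk, ZeroHom.coe_mk]
  refine ⟨halfB h2 c, ?_⟩
  show halfB h2 c - (r 1 : DihedralGroup q) • halfB h2 c = _
  rw [halfB_sub, halfB_gsmul]

/-- Fixed points of `Σ = ⟨sr 0⟩` resp. `Σ' = ⟨sr 0 * r 1⟩`. -/
lemma mem_fixedBy_gen {g : DihedralGroup q} {b : B} (hb : g • b = b) :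
    b ∈ fixedBy q B (Subgroup.closure {g}) := by
  intro h hh
  induction hh using Subgroup.closure_induction with
  | mem x hx => rw [Set.mem_singleton_iff.1 hx]; exact hb
  | one => exact one_smul _ b
  | mul x y hx hy ihx ihy => rw [mul_smul, ihy, ihx]
  | inv x hx ih => nth_rewrite 1 [← ih]; rw [← mul_smul, inv_mul_cancel, one_smul]

lemma fixedBy_sigma_spec {b : B} (hb : b ∈ fixedBy q B (Subgroup.closure {(sr 0 : DihedralGroup q)})) :
    (sr 0 : DihedralGroup q) • b = b :=
  hb _ (Subgroup.subset_closure rfl)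

lemma fixedBy_sigma'_spec {b : B}
    (hb : b ∈ fixedBy q B (Subgroup.closure {(sr 0 * r 1 : DihedralGroup q)})) :
    (sr 1 : DihedralGroup q) • b = b := by
  have := hb _ (Subgroup.subset_closure rfl)
  rwa [sr_mul_r, zero_add] at this

lemma mem_fixedBy_sigma {b : B} (hb : (sr 0 : DihedralGroup q) • b = b) :
    b ∈ fixedBy q B (Subgroup.closure {(sr 0 : DihedralGroup q)}) :=
  mem_fixedBy_gen q hb

lemma mem_fixedBy_sigma' {b : B} (hb : (sr 1 : DihedralGroup q) • b = b) :
    b ∈ fixedBy q B (Subgroup.closure {(sr 0 * r 1 : DihedralGroup q)}) := by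
  have : (sr 0 * r 1 : DihedralGroup q) = sr 1 := by rw [sr_mul_r, zero_add]
  rw [this]
  exact mem_fixedBy_gen q hb

lemma sigma'_smul {b : B} (hb : (sr 1 : DihedralGroup q) • b = b) :
    (sr 0 : DihedralGroup q) • b = (r 1 : DihedralGroup q) • b := by
  nth_rewrite 1 [← hb]
  rw [← mul_smul, sr_mul_sr, sub_zero]

/-- `I_G B ⊆ B^Σ + B^Σ'`. -/
lemma augG_le_sup : augG q B ≤
    fixedBy q B (Subgroup.closure {(sr 0 : DihedralGroup q)}) ⊔
      fixedBy q B (Subgroup.closure {(sr 0 * r 1 : DihedralGroup q)}) := by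
  rintro y ⟨c, rfl⟩
  simp only [AddMonoidHom.coe_mk, ZeroHom.coe_mk]
  set c₀ : B := -((sr 1 : DihedralGroup q) • c) with hc₀
  have hu : c₀ + (sr 0 : DihedralGroup q) • c₀ ∈
      fixedBy q B (Subgroup.closure {(sr 0 : DihedralGroup q)}) := by
    refine mem_fixedBy_sigma q ?_
    rw [smul_add, sr0_sr0_smul, add_comm]
  have hv : -(c₀ + (sr 1 : DihedralGroup q) • c₀) ∈
      fixedBy q B (Subgroup.closure {(sr 0 * r 1 : DihedralGroup q)}) := by
    refine mem_fixedBy_sigma' q ?_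
    rw [smul_neg, smul_add, ← mul_smul, sr_mul_sr, sub_self, r_zero_smul, add_comm]
  have key : (c₀ + (sr 0 : DihedralGroup q) • c₀) + -(c₀ + (sr 1 : DihedralGroup q) • c₀)
      = c - (r 1 : DihedralGroup q) • c := by
    have e1 : (sr 0 : DihedralGroup q) • c₀ = -((r 1 : DihedralGroup q) • c) := by
      rw [hc₀, smul_neg, ← mul_smul, sr_mul_sr, sub_zero]
    have e2 : (sr 1 : DihedralGroup q) • c₀ = -c := by
      rw [hc₀, smul_neg, ← mul_smul, sr_mul_sr, sub_self, r_zero_smul]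
    rw [e1, e2]
    abel
  rw [← key]
  exact AddSubgroup.add_mem _ (AddSubgroup.mem_sup_left hu) (AddSubgroup.mem_sup_right hv)

/-- Decomposition of a `Σ'`-fixed vector. -/
lemma sigma'_decomp (h2 : Function.Bijective (fun b : B => (2 : ℤ) • b))
    {v : B} (hv : (sr 1 : DihedralGroup q) • v = v) :
    ∃ p ∈ fixedBy q B (Subgroup.closure {(sr 0 : DihedralGroup q)}),
      ∃ w ∈ augG q B, p + w = v := by
  refine ⟨halfB h2 (v + (sr 0 : DihedralGroup q) • v), ?_, halfB h2 (v - (sr 0 : DihedralGroup q) • v), ?_, ?_⟩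
  · refine mem_fixedBy_sigma q ?_
    rw [← halfB_gsmul, smul_add, sr0_sr0_smul, add_comm]
  · have : v - (sr 0 : DihedralGroup q) • v = v - (r 1 : DihedralGroup q) • v := by
      rw [sigma'_smul q hv]
    rw [this, halfB_sub, halfB_gsmul]
    exact augG_r_sub q 1 _
  · rw [← halfB_add]
    have : v + (sr 0 : DihedralGroup q) • v + (v - (sr 0 : DihedralGroup q) • v) = (2:ℤ) • v := by
      rw [two_zsmul]; abel
    rw [this, halfB_two_smul]

/-- `B^Σ ⊔ B^Σ' = B^Σ ⊔ I_G B`. -/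
lemma sup_fix_eq (h2 : Function.Bijective (fun b : B => (2 : ℤ) • b)) :
    fixedBy q B (Subgroup.closure {(sr 0 : DihedralGroup q)}) ⊔
      fixedBy q B (Subgroup.closure {(sr 0 * r 1 : DihedralGroup q)})
    = fixedBy q B (Subgroup.closure {(sr 0 : DihedralGroup q)}) ⊔ augG q B := by
  apply le_antisymm
  · refine sup_le le_sup_left ?_
    intro v hv
    obtain ⟨p, hp, w, hw, hpw⟩ := sigma'_decomp q h2 (fixedBy_sigma'_spec q hv)
    rw [← hpw]
    exact AddSubgroup.add_mem _ (AddSubgroup.mem_sup_left hp) (AddSubgroup.mem_sup_right hw)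
  · exact sup_le le_sup_left (augG_le_sup q)

/-- The `σ`-antiinvariant part of `I_D B`. -/
def sigAug : AddSubgroup B :=
  AddMonoidHom.range
    { toFun := fun b => b - (sr 0 : DihedralGroup q) • b
      map_zero' := by simp
      map_add' := by intro x y; simp only [smul_add]; abel }

lemma mem_augD_gen (g : DihedralGroup q) (b : B) : b - g • b ∈ augD q B :=
  AddSubgroup.subset_closure ⟨g, b, rfl⟩

lemma augG_le_augD : augG q B ≤ augD q B := by
  rintro y ⟨c, rfl⟩
  exact mem_augD_gen q _ c

lemma sigAug_le_augD : sigAug q ≤ augD q B := by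
  rintro y ⟨c, rfl⟩
  exact mem_augD_gen q _ c

lemma augD_le_sup : augD q B ≤ augG q B ⊔ sigAug q := by
  rw [augD, AddSubgroup.closure_le]
  rintro y ⟨g, b, rfl⟩
  rcases g with j | j
  · exact AddSubgroup.mem_sup_left (augG_r_sub q j b)
  · have key : b - (sr j : DihedralGroup q) • b
        = (b - (r j : DihedralGroup q) • b)
          + ((r j : DihedralGroup q) • b - (sr 0 : DihedralGroup q) • ((r j : DihedralGroup q) • b)) := by
      rw [← mul_smul, sr_mul_r, zero_add]
      abel
    rw [key]
    exact AddSubgroup.add_mem _ (AddSubgroup.mem_sup_left (augG_r_sub q j b))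
      (AddSubgroup.mem_sup_right ⟨(r j : DihedralGroup q) • b, rfl⟩)

end Aux4

section Aux5
open Finset DihedralGroup

set_option linter.unusedSectionVars false

variable (q : ℕ) [NeZero q] {B : Type*} [AddCommGroup B]
  [DistribMulAction (DihedralGroup q) B]

lemma capFix_augD_le_augG (h2 : Function.Bijective (fun b : B => (2 : ℤ) • b)) {x : B}
    (hfix : x ∈ fixedBy q B (Subgroup.closure {(sr 0 : DihedralGroup q)}) ⊔
      fixedBy q B (Subgroup.closure {(sr 0 * r 1 : DihedralGroup q)}))
    (hD : x ∈ augD q B) : x ∈ augG q B := by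
  obtain ⟨u, hu, v, hv, huv⟩ := AddSubgroup.mem_sup.1 (augD_le_sup q hD)
  obtain ⟨c, hc⟩ := hv
  have hc' : c - (sr 0 : DihedralGroup q) • c = v := hc
  obtain ⟨p, hp, w, hw, hpw⟩ := AddSubgroup.mem_sup.1 hfix
  have hσv : (sr 0 : DihedralGroup q) • v = -v := by
    rw [← hc', smul_sub, sr0_sr0_smul]
    abel
  have hσp : (sr 0 : DihedralGroup q) • p = p := fixedBy_sigma_spec q hp
  have hσw : (sr 0 : DihedralGroup q) • w = (r 1 : DihedralGroup q) • w :=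
    sigma'_smul q (fixedBy_sigma'_spec q hw)
  have hplus : halfB h2 (x + (sr 0 : DihedralGroup q) • x) ∈ augG q B := by
    have e : x + (sr 0 : DihedralGroup q) • x = u + (sr 0 : DihedralGroup q) • u := by
      rw [← huv, smul_add, hσv]
      abel
    rw [e]
    exact augG_halfB q h2 (AddSubgroup.add_mem _ hu (augG_sr0 q hu))
  have hminus : halfB h2 (x - (sr 0 : DihedralGroup q) • x) ∈ augG q B := by
    have e : x - (sr 0 : DihedralGroup q) • x = w - (r 1 : DihedralGroup q) • w := by
      rw [← hpw, smul_add, hσp, hσw]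
      abel
    rw [e, halfB_sub, halfB_gsmul]
    exact augG_r_sub q 1 _
  have hx : x = halfB h2 (x + (sr 0 : DihedralGroup q) • x)
      + halfB h2 (x - (sr 0 : DihedralGroup q) • x) := by
    rw [← halfB_add]
    have e : x + (sr 0 : DihedralGroup q) • x + (x - (sr 0 : DihedralGroup q) • x)
        = (2 : ℤ) • x := by rw [two_zsmul]; abel
    rw [e, halfB_two_smul]
  rw [hx]
  exact AddSubgroup.add_mem _ hplus hminus

lemma part1 (h2 : Function.Bijective (fun b : B => (2 : ℤ) • b)) :
    Nonempty
      ((kerNormCapFix q B ⧸ ((augG q B).addSubgroupOf (kerNormCapFix q B))) ≃+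
        Hneg1D q B) := by
  have hmemD : ∀ x : kerNormCapFix q B, (x : B) ∈ (normD q B).ker := by
    intro x
    have h1 : normG q B (x : B) = 0 := x.2.1
    rw [AddMonoidHom.mem_ker, normD_eq, h1, smul_zero, add_zero]
  let φ : kerNormCapFix q B →+ Hneg1D q B :=
    { toFun := fun x => QuotientAddGroup.mk ⟨(x : B), hmemD x⟩
      map_zero' := rfl
      map_add' := fun _ _ => rfl }
  have hker : φ.ker = (augG q B).addSubgroupOf (kerNormCapFix q B) := by
    ext x
    rw [AddMonoidHom.mem_ker, AddSubgroup.mem_addSubgroupOf]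
    show QuotientAddGroup.mk _ = (0 : Hneg1D q B) ↔ _
    rw [QuotientAddGroup.eq_zero_iff, AddSubgroup.mem_addSubgroupOf]
    constructor
    · intro h
      exact capFix_augD_le_augG q h2 x.2.2 h
    · intro h
      exact augG_le_augD q h
  have hsurj : Function.Surjective φ := by
    intro z
    obtain ⟨y, rfl⟩ := QuotientAddGroup.mk_surjective z
    set a : B := halfB h2 ((y : B) + (sr 0 : DihedralGroup q) • (y : B)) with ha
    have hσa : (sr 0 : DihedralGroup q) • a = a := by
      rw [ha, ← halfB_gsmul, smul_add, sr0_sr0_smul, add_comm]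
    have hna : normG q B a = 0 := by
      rw [ha, ← halfB_normG, map_add, normG_sr0]
      have : normG q B (y : B) + (sr 0 : DihedralGroup q) • normG q B (y : B) = 0 := by
        rw [← normD_eq]
        exact y.2
      rw [this, halfB_zero]
    have hmem : a ∈ kerNormCapFix q B :=
      ⟨hna, AddSubgroup.mem_sup_left (mem_fixedBy_sigma q hσa)⟩
    refine ⟨⟨a, hmem⟩, ?_⟩
    show QuotientAddGroup.mk _ = QuotientAddGroup.mk y
    rw [QuotientAddGroup.eq_iff_sub_mem, AddSubgroup.mem_addSubgroupOf]
    show a - (y : B) ∈ augD q B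
    have e : a - (y : B)
        = -(halfB h2 (y : B) - (sr 0 : DihedralGroup q) • halfB h2 (y : B)) := by
      apply h2.1
      show (2 : ℤ) • _ = (2 : ℤ) • _
      rw [smul_sub, ha, two_smul_halfB, smul_neg, smul_sub, ← g_zsmul, two_smul_halfB]
      abel
    rw [e]
    exact AddSubgroup.neg_mem _ (mem_augD_gen q _ _)
  exact ⟨(QuotientAddGroup.quotientAddEquivOfEq hker.symm).trans
    (QuotientAddGroup.quotientKerEquivOfSurjective φ hsurj)⟩

end Aux5

section Aux6
open Finset DihedralGroup

set_option linter.unusedSectionVars false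

variable (q : ℕ) [NeZero q] {B : Type*} [AddCommGroup B]
  [DistribMulAction (DihedralGroup q) B]

lemma dNF_telescope (w : B) (n : ℕ) :
    dNF q (w - (r 1 : DihedralGroup q) • w) n = w - (r (n : ZMod q) : DihedralGroup q) • w := by
  induction n with
  | zero => rw [dNF_zero, Nat.cast_zero, r_zero_smul, sub_self]
  | succ n ih =>
      rw [dNF_succ, ih, smul_sub, r_r_smul]
      rw [show ((n + 1 : ℕ) : ZMod q) = (n : ZMod q) + 1 by push_cast; ring]
      abel

lemma dz_telescope (w : B) (i : ZMod q) :
    dz q (w - (r 1 : DihedralGroup q) • w) i = w - (r i : DihedralGroup q) • w := by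
  have := dNF_telescope q w i.val
  rw [r_val] at this
  exact this

section Part2
variable (h2 : Function.Bijective (fun b : B => (2 : ℤ) • b))

/-- The `σ`-antiinvariant projection. -/
noncomputable def xmFun (x : B) : B := halfB h2 (x - (sr 0 : DihedralGroup q) • x)

lemma xm_sr0 (x : B) : (sr 0 : DihedralGroup q) • xmFun q h2 x = -(xmFun q h2 x) := by
  rw [xmFun, ← halfB_gsmul, smul_sub, sr0_sr0_smul, ← halfB_neg]
  congr 1
  abel

lemma xm_norm {x : B} (hx : normG q B x = 0) : normG q B (xmFun q h2 x) = 0 := by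
  rw [xmFun, ← halfB_normG, map_sub, normG_sr0, hx, smul_zero, sub_zero, halfB_zero]

lemma xm_zero : xmFun q h2 (0 : B) = 0 := by
  rw [xmFun, smul_zero, sub_zero, halfB_zero]

lemma xm_add (x y : B) : xmFun q h2 (x + y) = xmFun q h2 x + xmFun q h2 y := by
  rw [xmFun, xmFun, xmFun, ← halfB_add, smul_add]
  congr 1
  abel

lemma xm_eq_self {x : B} (hσ : (sr 0 : DihedralGroup q) • x = -x) : xmFun q h2 x = x := by
  rw [xmFun, hσ, sub_neg_eq_add, ← two_zsmul, halfB_two_smul]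

/-- The homomorphism `B[N_G] → H¹(D,B)`. -/
noncomputable def PhiHom : (normG q B).ker →+ H1D q B :=
  { toFun := fun x => QuotientAddGroup.mk
      ⟨Fc q (xmFun q h2 (x : B)), Fc_mem q _ (xm_norm q h2 x.2) (xm_sr0 q h2 (x : B))⟩
    map_zero' := by
      have e : Fc q (xmFun q h2 ((0 : (normG q B).ker) : B)) = 0 := by
        rw [show ((0 : (normG q B).ker) : B) = 0 from rfl, xm_zero, Fc_zero]
      exact congrArg QuotientAddGroup.mk (Subtype.ext e)
    map_add' := fun x y => by
      have e : Fc q (xmFun q h2 ((x + y : (normG q B).ker) : B))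
          = Fc q (xmFun q h2 (x : B)) + Fc q (xmFun q h2 (y : B)) := by
        rw [show ((x + y : (normG q B).ker) : B) = (x : B) + (y : B) from rfl, xm_add, Fc_add]
      exact congrArg QuotientAddGroup.mk (Subtype.ext e) }

lemma PhiHom_ker :
    (PhiHom q h2).ker = (fixCapKerNorm q B).addSubgroupOf (normG q B).ker := by
  ext x
  rw [AddMonoidHom.mem_ker, AddSubgroup.mem_addSubgroupOf]
  show QuotientAddGroup.mk _ = (0 : H1D q B) ↔ _
  rw [QuotientAddGroup.eq_zero_iff, AddSubgroup.mem_addSubgroupOf]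
  constructor
  · -- coboundary ⟹ x ∈ (B^Σ + B^Σ') ⊓ ker N_G
    intro h
    replace h : Fc q (xmFun q h2 (x : B)) ∈ B1D q B := h
    obtain ⟨b, hb⟩ := (mem_B1D q).1 h
    have hbσ : (sr 0 : DihedralGroup q) • b - b = xmFun q h2 (x : B) := by
      have := congrFun hb (sr 0)
      rwa [Fc_sr, dz_zero, smul_zero, add_zero] at this
    by_cases hq1 : q = 1
    · subst hq1
      have hx0 : (x : B) = 0 := by
        have h1 : normG 1 B (x : B) = (x : B) := by
          rw [normG_apply, Fintype.sum_subsingleton _ (0 : ZMod 1), r_zero_smul]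
        have h2' : normG 1 B (x : B) = 0 := x.2
        rw [← h1, h2']
      rw [hx0]
      exact AddSubgroup.zero_mem _
    · have hq0 : q ≠ 0 := NeZero.ne q
      haveI : Fact (1 < q) := ⟨by omega⟩
      have hdz1 : ∀ y : B, dz q y 1 = y := by
        intro y
        rw [dz, ZMod.val_one, show dNF q y 1 = dNF q y 0
            + (r ((0:ℕ) : ZMod q) : DihedralGroup q) • y from dNF_succ q y 0,
          dNF_zero, Nat.cast_zero, r_zero_smul, zero_add]
      have hbr : (r 1 : DihedralGroup q) • b - b = xmFun q h2 (x : B) := by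
        have h3 := congrFun hb (r 1)
        rw [Fc_r, hdz1] at h3
        exact h3
      have hy : xmFun q h2 (x : B) ∈ augG q B := by
        rw [← hbr]
        have : (r 1 : DihedralGroup q) • b - b = -(b - (r 1 : DihedralGroup q) • b) := by abel
        rw [this]
        exact AddSubgroup.neg_mem _ (augG_r_sub q 1 b)
      have hxp : (sr 0 : DihedralGroup q) • halfB h2 ((x : B) + (sr 0 : DihedralGroup q) • (x : B))
          = halfB h2 ((x : B) + (sr 0 : DihedralGroup q) • (x : B)) := by
        rw [← halfB_gsmul, smul_add, sr0_sr0_smul, add_comm]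
      have hdecomp : (x : B) = halfB h2 ((x : B) + (sr 0 : DihedralGroup q) • (x : B))
          + xmFun q h2 (x : B) := by
        rw [xmFun, ← halfB_add]
        have e : (x : B) + (sr 0 : DihedralGroup q) • (x : B)
            + ((x : B) - (sr 0 : DihedralGroup q) • (x : B)) = (2 : ℤ) • (x : B) := by
          rw [two_zsmul]; abel
        rw [e, halfB_two_smul]
      refine ⟨?_, x.2⟩
      rw [hdecomp]
      exact AddSubgroup.add_mem _
        (AddSubgroup.mem_sup_left (mem_fixedBy_sigma q hxp))
        (augG_le_sup q hy)
  · -- x ∈ (B^Σ + B^Σ') ⊓ ker N_G ⟹ coboundary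
    intro h
    obtain ⟨u, hu, v, hv, huv⟩ := AddSubgroup.mem_sup.1 h.1
    have hσu : (sr 0 : DihedralGroup q) • u = u := fixedBy_sigma_spec q hu
    have hsrv : (sr 1 : DihedralGroup q) • v = v := fixedBy_sigma'_spec q hv
    have hσv : (sr 0 : DihedralGroup q) • v = (r 1 : DihedralGroup q) • v := sigma'_smul q hsrv
    set w : B := halfB h2 v with hw
    have hsrw : (sr 1 : DihedralGroup q) • w = w := by
      rw [hw, ← halfB_gsmul, hsrv]
    have hσw : (sr 0 : DihedralGroup q) • w = (r 1 : DihedralGroup q) • w := sigma'_smul q hsrw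
    have hxy : xmFun q h2 (x : B) = w - (r 1 : DihedralGroup q) • w := by
      rw [xmFun, show (x : B) - (sr 0 : DihedralGroup q) • (x : B)
          = v - (r 1 : DihedralGroup q) • v by rw [← huv, smul_add, hσu, hσv]; abel,
        halfB_sub, halfB_gsmul, ← hw]
    show Fc q (xmFun q h2 (x : B)) ∈ B1D q B
    refine (mem_B1D q).2 ⟨-w, ?_⟩
    funext g
    rcases g with i | i
    · rw [Fc_r, hxy, dz_telescope, smul_neg]
      abel
    · rw [Fc_sr, hxy, dz_telescope, smul_sub, hσw]
      have hsriw : (sr 0 : DihedralGroup q) • (r i : DihedralGroup q) • w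
          = (r (1 - i) : DihedralGroup q) • w := by
        rw [← mul_smul, sr_mul_r, zero_add,
          show (sr i : DihedralGroup q) = r (1 - i) * sr 1 by rw [r_mul_sr]; congr 1; ring,
          mul_smul, hsrw]
      have hsriw' : (sr i : DihedralGroup q) • (-w) = -((r (1 - i) : DihedralGroup q) • w) := by
        rw [smul_neg, show (sr i : DihedralGroup q) = r (1 - i) * sr 1 by
          rw [r_mul_sr]; congr 1; ring, mul_smul, hsrw]
      rw [hsriw, hsriw']
      abel

lemma PhiHom_surj : Function.Surjective (PhiHom q h2) := by
  intro z
  obtain ⟨y, rfl⟩ := QuotientAddGroup.mk_surjective z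
  obtain ⟨f, hf⟩ := y
  have hf' := (mem_Z1D q).1 hf
  set a : B := f (sr 1) with ha
  set b₀ : B := halfB h2 a with hb₀def
  have hf1 : f 1 = 0 := by
    have h0 := hf' 1 1
    rw [mul_one, one_smul] at h0
    exact left_eq_add.1 h0
  have hτa : (sr 1 : DihedralGroup q) • a = -a := by
    have h0 := hf' (sr 1) (sr 1)
    rw [sr_mul_sr, sub_self, ← one_def, hf1] at h0
    exact eq_neg_of_add_eq_zero_right h0.symm
  set F' : DihedralGroup q → B := fun g => f g + (g • b₀ - b₀) with hF'
  have hc : ∀ g h : DihedralGroup q, F' (g * h) = F' g + g • F' h := by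
    intro g h
    show f (g * h) + ((g * h) • b₀ - b₀) = (f g + (g • b₀ - b₀)) + g • (f h + (h • b₀ - b₀))
    rw [hf' g h, mul_smul, smul_add, smul_sub]
    abel
  have hsr1b : (sr 1 : DihedralGroup q) • b₀ = -b₀ := by
    rw [hb₀def, ← halfB_gsmul, hτa, halfB_neg]
  have hFτ : F' (sr 1) = 0 := by
    show a + ((sr 1 : DihedralGroup q) • b₀ - b₀) = 0
    rw [hsr1b]
    have e : a + (-b₀ - b₀) = a - (2 : ℤ) • b₀ := by rw [two_zsmul]; abel
    rw [e, hb₀def, two_smul_halfB, sub_self]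
  set x : B := F' (r 1) with hx1
  have hF0 : F' (r 0) = 0 := by
    show f (r 0) + ((r 0 : DihedralGroup q) • b₀ - b₀) = 0
    rw [r_zero_smul, sub_self, add_zero, ← one_def, hf1]
  have hfr : ∀ n : ℕ, F' (r (n : ZMod q)) = dNF q x n := by
    intro n
    induction n with
    | zero => rw [Nat.cast_zero, hF0, dNF_zero]
    | succ n ih =>
        have e : (r ((n + 1 : ℕ) : ZMod q) : DihedralGroup q) = r (n : ZMod q) * r 1 := by
          rw [r_mul_r]; congr 1; push_cast; ring
        rw [e, hc (r (n : ZMod q)) (r 1), ih, ← hx1, dNF_succ]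
  have hx : normG q B x = 0 := by
    have hq0 := hfr q
    rw [ZMod.natCast_self, hF0] at hq0
    rw [← dNF_q, ← hq0]
  have hrneg : F' (r (-1)) = -((r (-1) : DihedralGroup q) • x) := by
    have h0 := hc (r 1) (r (-1))
    rw [r_mul_r, show (1 : ZMod q) + -1 = 0 by ring, hF0, ← hx1] at h0
    have h1 : (r 1 : DihedralGroup q) • F' (r (-1)) = -x := by
      have := h0.symm
      rw [← eq_sub_iff_add_eq] at this
      rw [this]; abel
    have h2' := congrArg (fun z => (r (-1) : DihedralGroup q) • z) h1
    rw [← mul_smul, r_mul_r, show (-1 : ZMod q) + 1 = 0 by ring, r_zero_smul, smul_neg] at h2'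
    exact h2'
  have hσF : F' (sr 0) = -((sr 0 : DihedralGroup q) • x) := by
    have h0 := hc (sr 1) (r (-1))
    rw [sr_mul_r, show (1 : ZMod q) + -1 = 0 by ring, hFτ, zero_add, hrneg] at h0
    rw [h0, smul_neg, ← mul_smul, sr_mul_r, show (1 : ZMod q) + -1 = 0 by ring]
  have hσx : (sr 0 : DihedralGroup q) • x = -x := by
    have h0 := hc (sr 0) (sr 0)
    rw [sr_mul_sr, sub_self, hF0, hσF, smul_neg, ← mul_smul, sr_mul_sr, sub_self,
      r_zero_smul] at h0
    have h3 := congrArg (fun z : B => -z) h0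
    simp only [neg_zero, neg_add, neg_neg] at h3
    exact eq_neg_of_add_eq_zero_left h3.symm
  have hfeqr : ∀ i : ZMod q, F' (r i) = dz q x i := by
    intro i
    have := hfr i.val
    rw [r_val] at this
    exact this
  have hfeq : Fc q x = F' := by
    funext g
    rcases g with i | i
    · rw [Fc_r, hfeqr]
    · have h0 := hc (sr 0) (r i)
      rw [sr_mul_r, zero_add, hσF, hfeqr] at h0
      rw [Fc_sr, h0, hσx, neg_neg]
  refine ⟨⟨x, hx⟩, ?_⟩
  show QuotientAddGroup.mk _ = QuotientAddGroup.mk _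
  rw [QuotientAddGroup.eq_iff_sub_mem, AddSubgroup.mem_addSubgroupOf]
  show Fc q (xmFun q h2 x) - f ∈ B1D q B
  rw [xm_eq_self q h2 hσx, hfeq]
  refine (mem_B1D q).2 ⟨b₀, ?_⟩
  funext g
  show g • b₀ - b₀ = F' g - f g
  show g • b₀ - b₀ = (f g + (g • b₀ - b₀)) - f g
  abel

end Part2

lemma part2 (h2 : Function.Bijective (fun b : B => (2 : ℤ) • b)) : Nonempty
    (((normG q B).ker ⧸ ((fixCapKerNorm q B).addSubgroupOf (normG q B).ker)) ≃+
      H1D q B) :=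
  ⟨(QuotientAddGroup.quotientAddEquivOfEq (PhiHom_ker q h2).symm).trans
    (QuotientAddGroup.quotientKerEquivOfSurjective (PhiHom q h2) (PhiHom_surj q h2))⟩

end Aux6

/-- For `D` dihedral of order `2q` (`q` odd) with rotation subgroup `G` and
reflection subgroups `Σ = ⟨σ⟩`, `Σ' = ⟨σρ⟩`, and `B` a uniquely 2-divisible `D`-module:
`(B[N_G] ∩ (B^Σ + B^Σ'))/I_G·B ≅ Ĥ⁻¹(D, B)` and
`B[N_G]/((B^Σ + B^Σ') ∩ B[N_G]) ≅ H¹(D, B)` as abelian groups. -/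
theorem quotients_iso_tate_dihedral (q : ℕ) [NeZero q] (hq : Odd q)
    (B : Type*) [AddCommGroup B] [DistribMulAction (DihedralGroup q) B]
    (h2 : Function.Bijective (fun b : B => (2 : ℤ) • b)) :
    Nonempty
      ((kerNormCapFix q B ⧸ ((augG q B).addSubgroupOf (kerNormCapFix q B))) ≃+
        Hneg1D q B) ∧
    Nonempty
      (((normG q B).ker ⧸ ((fixCapKerNorm q B).addSubgroupOf (normG q B).ker)) ≃+
        H1D q B) := by
  exact ⟨part1 q h2, part2 q h2⟩
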